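/- Let K be a naturally ordered positive commutative semiring, D a finite set, R, S : D × D → K, and let f_R, f_S be any choice functions selecting for each a with some R(a,·) ≠ 0 a value b with R(a,b) ≠ 0, and for each b with some S(b,·) ≠ 0 a value c with S(b,c) ≠ 0. Then Σ_{a ∈ D} min_{b : R(a,b) ≠ 0}( R(a,b) × min_{c : S(b,c) ≠ 0} S(b,c) ) ≤_K Σ_{a : ∃b R(a,b)≠0} R(a, f_R(a)) × (S-value at f_R(a) under f_S, where the value is 0 if S(f_R(a),·) has empty support), with min ∅ = 0. -/

import Mathlib

/-- The canonical preorder of a commutative semiring. -/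
def canLe {K : Type*} [CommSemiring K] (a b : K) : Prop := ∃ c, a + c = b

/-- `m` is the minimum of `A` with respect to the canonical preorder,
with the convention `min ∅ = 0`. -/
def IsMinOf {K : Type*} [CommSemiring K] (m : K) (A : Set K) : Prop :=
  (A = ∅ ∧ m = 0) ∨ (m ∈ A ∧ ∀ x ∈ A, canLe m x)

open Classical in
/-- The value of the query `q_path` on the repair determined by the choice
functions `fR` and `fS`. -/
noncomputable def qpathRepairValue {K : Type*} [CommSemiring K] {D : Type*} [Fintype D]
    (R S : D → D → K) (fR fS : D → D) : K :=
  ∑ a ∈ Finset.univ.filter (fun a => ∃ b, R a b ≠ 0),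
    R a (fR a) * (if ∃ c, S (fR a) c ≠ 0 then S (fR a) (fS (fR a)) else 0)

/-!
The canonical preorder is compatible with `+` and `·` in every commutative semiring, so it
suffices to compare summands: for a key `a` with nonempty `R`-block and `b = f_R a`,
`min_b' (R(a,b') · min_c S(b',c)) ≤ R(a,b) · min_c S(b,c) ≤ R(a,b) · S(b, f_S b)`,
where an empty `S`-block gives `0` on both sides by the convention `min ∅ = 0`.
Keys with empty `R`-block contribute `min ∅ = 0` on the left and nothing on the right.
-/

section CanLe

variable {K : Type*} [CommSemiring K] {a b c d : K}

theorem canLe_refl (a : K) : canLe a a := ⟨0, add_zero a⟩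

theorem canLe.trans (hab : canLe a b) (hbc : canLe b c) : canLe a c := by
  obtain ⟨u, rfl⟩ := hab
  obtain ⟨v, rfl⟩ := hbc
  exact ⟨u + v, (add_assoc a u v).symm⟩

theorem canLe.add (hab : canLe a b) (hcd : canLe c d) : canLe (a + c) (b + d) := by
  obtain ⟨u, rfl⟩ := hab
  obtain ⟨v, rfl⟩ := hcd
  exact ⟨u + v, add_add_add_comm a c u v⟩

theorem canLe.mul_left (r : K) (hab : canLe a b) : canLe (r * a) (r * b) := by
  obtain ⟨u, rfl⟩ := hab
  exact ⟨r * u, (mul_add r a u).symm⟩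

theorem canLe_sum {ι : Type*} {s : Finset ι} {f g : ι → K} (h : ∀ i ∈ s, canLe (f i) (g i)) :
    canLe (∑ i ∈ s, f i) (∑ i ∈ s, g i) := by
  induction s using Finset.cons_induction with
  | empty => exact canLe_refl 0
  | cons i s hi ih =>
    rw [Finset.sum_cons, Finset.sum_cons]
    exact (h i (Finset.mem_cons_self i s)).add (ih fun j hj => h j (Finset.mem_cons_of_mem hj))

end CanLe

namespace IsMinOf

variable {K : Type*} [CommSemiring K] {ι : Type*} {p : ι → Prop} {v : ι → K} {m : K}

theorem canLe_of_witness (hm : IsMinOf m {x | ∃ i, p i ∧ x = v i}) {i : ι} (hi : p i) :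
    canLe m (v i) := by
  rcases hm with ⟨hempty, -⟩ | ⟨-, hmin⟩
  · exact absurd (hempty ▸ ⟨i, hi, rfl⟩ : v i ∈ (∅ : Set K)) (Set.notMem_empty _)
  · exact hmin _ ⟨i, hi, rfl⟩

theorem eq_zero_of_forall_not (hm : IsMinOf m {x | ∃ i, p i ∧ x = v i}) (hp : ∀ i, ¬p i) :
    m = 0 := by
  rcases hm with ⟨-, hzero⟩ | ⟨⟨i, hi, -⟩, -⟩
  · exact hzero
  · exact absurd hi (hp i)

theorem canLe_choice [Decidable (∃ i, p i)] (hm : IsMinOf m {x | ∃ i, p i ∧ x = v i})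
    {j : ι} (hj : (∃ i, p i) → p j) : canLe m (if ∃ i, p i then v j else 0) := by
  split_ifs with hp
  · exact hm.canLe_of_witness (hj hp)
  · rw [hm.eq_zero_of_forall_not (not_exists.mp hp)]
    exact canLe_refl 0

end IsMinOf

theorem qpath_rewriting_lower_bound_general {K : Type*} [CommSemiring K]
    {D : Type*} [Fintype D]
    (R S : D → D → K)
    (mS : D → K)
    (hmS : ∀ b, IsMinOf (mS b) {x | ∃ c, S b c ≠ 0 ∧ x = S b c})
    (mRS : D → K)
    (hmRS : ∀ a, IsMinOf (mRS a) {x | ∃ b, R a b ≠ 0 ∧ x = R a b * mS b})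
    (fR fS : D → D)
    (hfR : ∀ a, (∃ b, R a b ≠ 0) → R a (fR a) ≠ 0)
    (hfS : ∀ b, (∃ c, S b c ≠ 0) → S b (fS b) ≠ 0) :
    canLe (∑ a : D, mRS a) (qpathRepairValue R S fR fS) := by
  classical
  have hsupport : ∑ a ∈ Finset.univ.filter (fun a => ∃ b, R a b ≠ 0), mRS a = ∑ a, mRS a :=
    Finset.sum_filter_of_ne fun a _ hne =>
      not_not.mp fun hR => hne ((hmRS a).eq_zero_of_forall_not (not_exists.mp hR))
  rw [qpathRepairValue, ← hsupport]
  refine canLe_sum fun a ha => ?_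
  have hRblock : canLe (mRS a) (R a (fR a) * mS (fR a)) :=
    (hmRS a).canLe_of_witness (hfR a (Finset.mem_filter.mp ha).2)
  exact hRblock.trans (((hmS (fR a)).canLe_choice (hfS (fR a))).mul_left _)

theorem qpath_rewriting_lower_bound {K : Type*} [CommSemiring K]
    (hzd : ∀ a b : K, a * b = 0 → a = 0 ∨ b = 0)
    (hpos : ∀ a b : K, a + b = 0 → a = 0 ∧ b = 0)
    (hanti : ∀ a b : K, canLe a b → canLe b a → a = b)
    (htot : ∀ a b : K, canLe a b ∨ canLe b a)
    {D : Type*} [Fintype D]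
    (R S : D → D → K)
    (mS : D → K)
    (hmS : ∀ b, IsMinOf (mS b) {x | ∃ c, S b c ≠ 0 ∧ x = S b c})
    (mRS : D → K)
    (hmRS : ∀ a, IsMinOf (mRS a) {x | ∃ b, R a b ≠ 0 ∧ x = R a b * mS b})
    (fR fS : D → D)
    (hfR : ∀ a, (∃ b, R a b ≠ 0) → R a (fR a) ≠ 0)
    (hfS : ∀ b, (∃ c, S b c ≠ 0) → S b (fS b) ≠ 0) :
    canLe (∑ a : D, mRS a) (qpathRepairValue R S fR fS) :=
  qpath_rewriting_lower_bound_general R S mS hmS mRS hmRS fR fS hfR hfS
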